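/- arXiv:1108.0790 — 5 statements merged into one kernel-verified Lean document; each statement's English description precedes it below -/
import Mathlib

section
/- Let m, n be positive integers and d = gcd(m, n). Suppose f, g, f_0, g_0 ∈ C(T) satisfy E_d(conj(f)·g) = α_m(f_0)·α_n(g_0). Then for every h ∈ C(T), E_m(conj(f)·g·E_n(h)) = α_m(f_0)·E_{lcm(m,n)}(α_n(g_0)·h). -/
open scoped Real ComplexOrder

noncomputable def Lm (m : ℕ) (f : Circle → ℂ) (z : Circle) : ℂ :=
  (m : ℂ)⁻¹ * ∑ᶠ w ∈ {w : Circle | w ^ m = z}, f w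

noncomputable def Em (m : ℕ) (f : Circle → ℂ) (z : Circle) : ℂ :=
  (m : ℂ)⁻¹ * ∑ j ∈ Finset.range m, f (Circle.exp (2 * π * j / m) * z)

noncomputable def Zf (k : ℤ) : C(Circle, ℂ) :=
  ⟨fun z => ((z ^ k : Circle) : ℂ), continuous_induced_dom.comp (continuous_zpow k)⟩

noncomputable def alphaMap (m : ℕ) (f : C(Circle, ℂ)) : C(Circle, ℂ) :=
  f.comp ⟨fun z => z ^ m, by fun_prop⟩

/-! `E_N Φ z` is the average of `Φ` over the coset `μ_N z`, where `μ_N` is the image of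
`ZMod.toCircle : ZMod N → Circle`. Since `μ_c ⊆ μ_N` for `c ∣ N`, every `E_N Φ` is
`μ_c`-invariant; hence `E_c E_N = E_N E_c = E_N`, and `E_N` is linear over `μ_N`-invariant
functions such as `α_N f` and `E_n h` (for `N ∣ n`). For coprime `a, b`, the map
`(x, y) ↦ x b + y a` identifies `ZMod a × ZMod b` with `ZMod (a b)` compatibly with `toCircle`,
so `E_a E_b = E_{ab}`; writing `lcm m n = a b` with coprime `a ∣ m`, `b ∣ n` gives
`E_m E_n = E_m E_a E_n E_b = E_m E_n E_{lcm m n} = E_{lcm m n}`.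
-/

lemma Nat.neZero_of_dvd {c N : ℕ} [NeZero N] (h : c ∣ N) : NeZero c :=
  ⟨fun hc => NeZero.ne N (Nat.eq_zero_of_zero_dvd (hc ▸ h))⟩

section RootsOfUnity

variable {N : ℕ} [NeZero N]

lemma Circle.exp_two_pi_mul_div_eq_toCircle (j : ℕ) :
    Circle.exp (2 * π * j / N) = ZMod.toCircle (j : ZMod N) := by
  ext
  rw [Circle.coe_exp, ZMod.toCircle_natCast]
  push_cast
  ring_nf

lemma ZMod.toCircle_pow_self (x : ZMod N) : ZMod.toCircle x ^ N = 1 := by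
  rw [← AddChar.map_nsmul_eq_pow, nsmul_eq_mul, ZMod.natCast_self, zero_mul,
    AddChar.map_zero_eq_one]

lemma ZMod.toCircle_natCast_mul {c k : ℕ} [NeZero c] (hN : N = c * k) (j : ℕ) :
    ZMod.toCircle ((j * k : ℕ) : ZMod N) = ZMod.toCircle (j : ZMod c) := by
  have hk : (k : ℂ) ≠ 0 := Nat.cast_ne_zero.mpr fun hk => NeZero.ne N (by simp [hN, hk])
  have hc : (c : ℂ) ≠ 0 := Nat.cast_ne_zero.mpr (NeZero.ne c)
  ext
  rw [ZMod.toCircle_natCast, ZMod.toCircle_natCast, hN]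
  congr 1
  push_cast
  field_simp

lemma ZMod.exists_toCircle_eq_of_dvd {c : ℕ} [NeZero c] (h : c ∣ N) (y : ZMod c) :
    ∃ x : ZMod N, ZMod.toCircle x = ZMod.toCircle y := by
  obtain ⟨k, hk⟩ := h
  exact ⟨_, by rw [ZMod.toCircle_natCast_mul hk, ZMod.natCast_zmod_val]⟩

lemma ZMod.sum_range_natCast {M : Type*} [AddCommMonoid M] (G : ZMod N → M) :
    ∑ j ∈ Finset.range N, G j = ∑ x : ZMod N, G x :=
  Finset.sum_nbij' (fun j => (j : ZMod N)) ZMod.val (by simp) (by simp [ZMod.val_lt])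
    (fun j hj => ZMod.val_cast_of_lt (Finset.mem_range.mp hj))
    (fun x _ => ZMod.natCast_zmod_val x) (fun _ _ => rfl)

end RootsOfUnity

lemma ZMod.sum_toCircle_mul_toCircle {a b : ℕ} [NeZero a] [NeZero b] (hab : a.Coprime b)
    {M : Type*} [AddCommMonoid M] (G : Circle → M) :
    ∑ x : ZMod a, ∑ y : ZMod b, G (ZMod.toCircle x * ZMod.toCircle y)
      = ∑ t : ZMod (a * b), G (ZMod.toCircle t) := by
  let e : ZMod a × ZMod b → ZMod (a * b) := fun p => (p.1.val * b + p.2.val * a : ℕ)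
  have he : ∀ p, ZMod.toCircle (e p) = ZMod.toCircle p.1 * ZMod.toCircle p.2 := by
    rintro ⟨x, y⟩
    simp only [e, Nat.cast_add, AddChar.map_add_eq_mul]
    rw [ZMod.toCircle_natCast_mul rfl, ZMod.toCircle_natCast_mul (mul_comm a b),
      ZMod.natCast_zmod_val, ZMod.natCast_zmod_val]
  have he_inj : Function.Injective e := by
    intro p q hpq
    have h1 := congrArg (ZMod.castHom (dvd_mul_right a b) (ZMod a)) hpq
    have h2 := congrArg (ZMod.castHom (dvd_mul_left b a) (ZMod b)) hpq
    simp only [e, Nat.cast_add, Nat.cast_mul, map_add, map_mul, map_natCast,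
      ZMod.natCast_zmod_val, ZMod.natCast_self, mul_zero, add_zero, zero_add] at h1 h2
    exact Prod.ext (((ZMod.isUnit_iff_coprime b a).mpr hab.symm).mul_left_inj.mp h1)
      (((ZMod.isUnit_iff_coprime a b).mpr hab).mul_left_inj.mp h2)
  rw [← Fintype.sum_prod_type']
  exact Fintype.sum_bijective e ((Fintype.bijective_iff_injective_and_card e).mpr
    ⟨he_inj, by simp [ZMod.card]⟩) _ _ fun p => by rw [he]

section Average

variable {N : ℕ} [NeZero N]

lemma Em_eq_sum_zmod (Φ : Circle → ℂ) (z : Circle) :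
    Em N Φ z = (N : ℂ)⁻¹ * ∑ x : ZMod N, Φ (ZMod.toCircle x * z) := by
  simp only [Em, Circle.exp_two_pi_mul_div_eq_toCircle]
  rw [ZMod.sum_range_natCast (fun x => Φ (ZMod.toCircle x * z))]

lemma Em_toCircle_mul (Φ : Circle → ℂ) (x : ZMod N) (z : Circle) :
    Em N Φ (ZMod.toCircle x * z) = Em N Φ z := by
  simp only [Em_eq_sum_zmod, ← mul_assoc, ← AddChar.map_add_eq_mul]
  congr 1
  exact Fintype.sum_equiv (Equiv.addRight x) _ _ fun _ => rfl

lemma Em_toCircle_mul_of_dvd {c : ℕ} [NeZero c] (h : c ∣ N) (Φ : Circle → ℂ)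
    (y : ZMod c) (z : Circle) : Em N Φ (ZMod.toCircle y * z) = Em N Φ z := by
  obtain ⟨x, hx⟩ := ZMod.exists_toCircle_eq_of_dvd h y
  rw [← hx, Em_toCircle_mul]

lemma Em_invariant_mul {Y : Circle → ℂ} (hY : ∀ (x : ZMod N) w, Y (ZMod.toCircle x * w) = Y w)
    (X : Circle → ℂ) (z : Circle) : Em N (fun w => Y w * X w) z = Y z * Em N X z := by
  simp only [Em_eq_sum_zmod, hY, ← Finset.mul_sum]
  ring

lemma Em_mul_invariant {Y : Circle → ℂ} (hY : ∀ (x : ZMod N) w, Y (ZMod.toCircle x * w) = Y w)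
    (X : Circle → ℂ) (z : Circle) : Em N (fun w => X w * Y w) z = Em N X z * Y z := by
  simp only [mul_comm (X _), mul_comm (Em N X z)]
  exact Em_invariant_mul hY X z

lemma Em_of_invariant {Y : Circle → ℂ}
    (hY : ∀ (x : ZMod N) w, Y (ZMod.toCircle x * w) = Y w) : Em N Y = Y := by
  ext z
  simp only [Em_eq_sum_zmod, hY, Finset.sum_const, Finset.card_univ, ZMod.card, nsmul_eq_mul]
  field_simp [NeZero.ne N]

lemma alphaMap_toCircle_mul (φ : C(Circle, ℂ)) (x : ZMod N) (w : Circle) :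
    alphaMap N φ (ZMod.toCircle x * w) = alphaMap N φ w := by
  simp only [alphaMap, ContinuousMap.comp_apply, ContinuousMap.coe_mk, mul_pow,
    ZMod.toCircle_pow_self, one_mul]

end Average

lemma Em_comm (m n : ℕ) (Φ : Circle → ℂ) : Em m (Em n Φ) = Em n (Em m Φ) := by
  ext z
  simp only [Em, Finset.mul_sum]
  rw [Finset.sum_comm]
  simp only [mul_left_comm]

lemma Em_Em_of_dvd_left {c N : ℕ} [NeZero N] (h : c ∣ N) (Φ : Circle → ℂ) :
    Em c (Em N Φ) = Em N Φ :=
  have := Nat.neZero_of_dvd h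
  Em_of_invariant (Em_toCircle_mul_of_dvd h Φ)

lemma Em_Em_of_dvd_right {c N : ℕ} [NeZero N] (h : c ∣ N) (Φ : Circle → ℂ) :
    Em N (Em c Φ) = Em N Φ := by
  rw [Em_comm, Em_Em_of_dvd_left h]

lemma Em_Em_of_coprime {a b : ℕ} [NeZero a] [NeZero b] (hab : a.Coprime b) (Φ : Circle → ℂ) :
    Em a (Em b Φ) = Em (a * b) Φ := by
  ext z
  rw [Em_eq_sum_zmod, Em_eq_sum_zmod,
    ← ZMod.sum_toCircle_mul_toCircle hab (fun w => Φ (w * z))]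
  simp only [Em_eq_sum_zmod, Finset.mul_sum, Nat.cast_mul, mul_inv, mul_assoc]
  exact Fintype.sum_congr _ _ fun _ => Fintype.sum_congr _ _ fun y => by
    rw [mul_left_comm (ZMod.toCircle y)]

lemma Em_Em (m n : ℕ) [NeZero m] [NeZero n] (Φ : Circle → ℂ) :
    Em m (Em n Φ) = Em (m.lcm n) Φ := by
  have ha : m.factorizationLCMLeft n ∣ m := Nat.factorizationLCMLeft_dvd_left m n
  have hb : m.factorizationLCMRight n ∣ n := Nat.factorizationLCMRight_dvd_right m n
  have := Nat.neZero_of_dvd ha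
  have := Nat.neZero_of_dvd hb
  have : NeZero (m.lcm n) := ⟨Nat.lcm_ne_zero (NeZero.ne m) (NeZero.ne n)⟩
  calc Em m (Em n Φ)
      = Em m (Em (m.factorizationLCMLeft n) (Em n (Em (m.factorizationLCMRight n) Φ))) := by
        rw [Em_Em_of_dvd_right hb, Em_Em_of_dvd_right ha]
    _ = Em m (Em n (Em (m.factorizationLCMLeft n * m.factorizationLCMRight n) Φ)) := by
        rw [Em_comm (m.factorizationLCMLeft n) n,
          Em_Em_of_coprime (Nat.coprime_factorizationLCMLeft_factorizationLCMRight m n)]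
    _ = Em (m.lcm n) Φ := by
        rw [Nat.factorizationLCMLeft_mul_factorizationLCMRight (NeZero.ne m) (NeZero.ne n),
          Em_Em_of_dvd_left (Nat.dvd_lcm_right m n), Em_Em_of_dvd_left (Nat.dvd_lcm_left m n)]

/-- if `E_d(f* g) = α_m(f₀) α_n(g₀)` with `d = gcd(m,n)`, then
`E_m(f* g E_n(h)) = α_m(f₀) E_{lcm(m,n)}(α_n(g₀) h)` for all `h`. -/
theorem stmt6 (m n : ℕ) (hm : 0 < m) (hn : 0 < n) (f g f₀ g₀ : C(Circle, ℂ))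
    (hfg : ∀ z, Em (Nat.gcd m n) (fun w => star (f w) * g w) z
      = alphaMap m f₀ z * alphaMap n g₀ z)
    (h : C(Circle, ℂ)) (z : Circle) :
    Em m (fun w => star (f w) * g w * Em n (h : Circle → ℂ) w) z
      = alphaMap m f₀ z * Em (Nat.lcm m n) (fun w => alphaMap n g₀ w * h w) z := by
  have := NeZero.of_pos hm
  have := NeZero.of_pos hn
  have := Nat.neZero_of_dvd (Nat.gcd_dvd_left m n)
  calc Em m (fun w => star (f w) * g w * Em n h w) z
      = Em m (Em (m.gcd n) (fun w => star (f w) * g w * Em n h w)) z := by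
        rw [Em_Em_of_dvd_right (Nat.gcd_dvd_left m n)]
    _ = Em m (fun w => alphaMap m f₀ w * (alphaMap n g₀ w * Em n h w)) z := by
        congr 1
        ext w
        rw [Em_mul_invariant (Em_toCircle_mul_of_dvd (Nat.gcd_dvd_right m n) h), hfg, mul_assoc]
    _ = alphaMap m f₀ z * Em m (Em n (fun w => alphaMap n g₀ w * h w)) z := by
        rw [Em_invariant_mul (alphaMap_toCircle_mul f₀)]
        congr 2
        ext w
        exact (Em_invariant_mul (alphaMap_toCircle_mul g₀) h w).symm
    _ = alphaMap m f₀ z * Em (Nat.lcm m n) (fun w => alphaMap n g₀ w * h w) z := by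
        rw [Em_Em]
end

section
/- Let A be a unital C*-algebra containing a unitary u and isometries w_m (m ≥ 1) satisfying w_{mn} = w_m w_n, w_m u = u^m w_m, and w_p* w_q = w_q w_p* for distinct primes p, q. Then for any coprime positive integers m and n, w_m w_n* = w_n* w_m. -/
/-- from (B0), (B1), (B2) we get `w_m w_n* = w_n* w_m` for coprime `m, n`. -/
theorem stmt9 {A : Type*} [NormedRing A] [StarRing A] [CStarRing A]
    [NormedAlgebra ℂ A] [CompleteSpace A] [StarModule ℂ A]
    (u : unitary A) (w : ℕ → A)
    (hiso : ∀ m : ℕ, 0 < m → star (w m) * w m = 1)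
    (hB0 : ∀ m n : ℕ, 0 < m → 0 < n → w (m * n) = w m * w n)
    (hB1 : ∀ m : ℕ, 0 < m → w m * (u : A) = (u : A) ^ m * w m)
    (hB2 : ∀ p q : ℕ, Nat.Prime p → Nat.Prime q → p ≠ q →
      star (w p) * w q = w q * star (w p)) :
    ∀ m n : ℕ, 0 < m → 0 < n → Nat.Coprime m n →
      w m * star (w n) = star (w n) * w m := by
  -- w 1 = 1
  have hw1 : w 1 = 1 := by
    have h : w 1 = w 1 * w 1 := by
      have := hB0 1 1 one_pos one_pos; simpa using this
    calc w 1 = (star (w 1) * w 1) * w 1 := by rw [hiso 1 one_pos, one_mul]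
      _ = star (w 1) * (w 1 * w 1) := by rw [mul_assoc]
      _ = star (w 1) * w 1 := by rw [← h]
      _ = 1 := hiso 1 one_pos
  -- commutation for distinct primes, star version
  have hcomm : ∀ p q : ℕ, Nat.Prime p → Nat.Prime q → p ≠ q →
      w p * star (w q) = star (w q) * w p := by
    intro p q hp hq hpq
    have := congrArg star (hB2 p q hp hq hpq)
    simpa [star_mul, star_star] using this.symm
  -- prime vs arbitrary coprime n
  have L3 : ∀ p : ℕ, Nat.Prime p → ∀ n : ℕ, 0 < n → Nat.Coprime p n →
      w p * star (w n) = star (w n) * w p := by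
    intro p hp n
    induction n using Nat.strong_induction_on with
    | _ n ih =>
      intro hn hcop
      rcases eq_or_ne n 1 with rfl | hne
      · simp [hw1]
      · have hqp : (n.minFac).Prime := Nat.minFac_prime hne
        obtain ⟨n', hn'eq⟩ := Nat.minFac_dvd n
        set q := n.minFac with hq
        have hn' : 0 < n' := by
          rcases Nat.eq_zero_or_pos n' with rfl | h
          · simp [hn'eq] at hn
          · exact h
        have hlt : n' < n := by
          have h2 := hqp.two_le
          rw [hn'eq]; nlinarith
        have hcopn' : Nat.Coprime p n' :=
          Nat.Coprime.coprime_dvd_right ⟨q, by rw [hn'eq]; ring⟩ hcop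
        have hcopq : Nat.Coprime p q :=
          Nat.Coprime.coprime_dvd_right ⟨n', hn'eq⟩ hcop
        have hpq : p ≠ q := by
          rintro rfl
          exact hp.one_lt.ne' (((Nat.coprime_self _).mp hcopq))
        rw [hn'eq, hB0 q n' hqp.pos hn', star_mul, ← mul_assoc,
          ih n' hlt hn' hcopn', mul_assoc, hcomm p q hp hqp hpq, ← mul_assoc]
  -- main induction on m
  intro m n
  induction m using Nat.strong_induction_on with
  | _ m ih =>
    intro hm hn hcop
    rcases eq_or_ne m 1 with rfl | hne
    · simp [hw1]
    · have hpp : (m.minFac).Prime := Nat.minFac_prime hne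
      obtain ⟨m', hm'eq⟩ := Nat.minFac_dvd m
      set p := m.minFac with hp
      have hm' : 0 < m' := by
        rcases Nat.eq_zero_or_pos m' with rfl | h
        · simp [hm'eq] at hm
        · exact h
      have hlt : m' < m := by
        have h2 := hpp.two_le
        rw [hm'eq]; nlinarith
      have hcopm' : Nat.Coprime m' n :=
        Nat.Coprime.coprime_dvd_left ⟨p, by rw [hm'eq]; ring⟩ hcop
      have hcopp : Nat.Coprime p n :=
        Nat.Coprime.coprime_dvd_left ⟨m', hm'eq⟩ hcop
      rw [hm'eq, hB0 p m' hpp.pos hm', mul_assoc, ih m' hlt hm' hn hcopm',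
        ← mul_assoc, L3 p hpp n hn hcopp, mul_assoc]
end

section
/- Let A be a unital C*-algebra with a unitary u and isometries w_m (m ≥ 1) satisfying w_{mn} = w_m w_n, w_m u = u^m w_m, and w_p* u^k w_p = 0 for every prime p and every 1 ≤ k < p. Then for all positive integers m, n and all integers l: if gcd(m,n) does not divide l then w_m* u^l w_n = 0, and if gcd(m,n) divides l then w_m* u^l w_n = w_{n'}* u^{l/gcd(m,n)} w_{m'}, where m' = m/gcd(m,n) and n' = n/gcd(m,n). -/
/-!
By (B1), compressing by an isometry `w_m` sends `u^(m q)` to `u^q`, and by (B3) the compression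
by `w_p`, `p` prime, kills `u^l` whenever `p ∤ l`. Since `w` is multiplicative (B0), induction
over the multiplicative structure of `m` gives `w_m* u^l w_m = u^(l/m)` if `m ∣ l` and `0`
otherwise. Writing `m = d m'`, `n = d n'` with `d = gcd(m, n)` finally reduces
`w_m* u^l w_n` to `w_{m'}* (w_d* u^l w_d) w_{n'}`.
-/

section Monoid

variable {R : Type*} [Monoid R] [StarMul R]

theorem SemiconjBy.unitary_zpow_right {a : R} {u v : unitary R} (h : SemiconjBy a u v) (l : ℤ) :
    SemiconjBy a ↑(u ^ l) ↑(v ^ l) := by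
  simpa only [← map_zpow, Unitary.val_toUnits_apply] using
    SemiconjBy.units_zpow_right (x := Unitary.toUnits u) (y := Unitary.toUnits v) h l

theorem mul_coe_zpow_eq_of_mul_eq {w : R} {u : unitary R} {m : ℕ} (h : w * u = (u : R) ^ m * w)
    (l : ℤ) : w * ↑(u ^ l) = ↑(u ^ ((m : ℤ) * l)) * w := by
  have hsemi : SemiconjBy w u ↑(u ^ (m : ℤ)) := by
    rwa [zpow_natCast, SubmonoidClass.coe_pow]
  have hl := hsemi.unitary_zpow_right l
  rwa [← zpow_mul] at hl

theorem star_mul_coe_zpow_mul_mul_self {w : R} {u : unitary R} {m : ℕ} (hw : star w * w = 1)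
    (h : w * u = (u : R) ^ m * w) (q : ℤ) : star w * ↑(u ^ ((m : ℤ) * q)) * w = ↑(u ^ q) := by
  rw [mul_assoc, ← mul_coe_zpow_eq_of_mul_eq h, ← mul_assoc, hw, one_mul]

theorem star_mul_mul_mul_mul (a b c x : R) :
    star (a * b) * x * (a * c) = star b * (star a * x * a) * c := by
  simp only [star_mul, mul_assoc]

end Monoid

section MonoidWithZero

variable {R : Type*} [MonoidWithZero R] [StarMul R]

theorem star_mul_coe_zpow_mul_self_eq_zero {w : R} {u : unitary R} {p : ℕ} (hp : 0 < p)
    (h : w * u = (u : R) ^ p * w)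
    (hvanish : ∀ k : ℕ, 1 ≤ k → k < p → star w * (u : R) ^ k * w = 0)
    {l : ℤ} (hl : ¬ (p : ℤ) ∣ l) : star w * ↑(u ^ l) * w = 0 := by
  set k := (l % p).toNat
  have hk : 1 ≤ k ∧ k < p := by
    have := Int.emod_lt_of_pos l (Int.natCast_pos.mpr hp)
    have := Int.emod_nonneg l (Int.natCast_pos.mpr hp).ne'
    have : l % p ≠ 0 := fun h0 => hl (Int.dvd_of_emod_eq_zero h0)
    omega
  have hdecomp : l = k + p * (l / p) := by
    have := Int.emod_add_mul_ediv l p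
    omega
  -- `u ^ (p * q)` moves through `w` as `u ^ q`, leaving `star w * u ^ k * w = 0`.
  rw [hdecomp, zpow_add, zpow_natCast, Submonoid.coe_mul, SubmonoidClass.coe_pow, ← mul_assoc,
    mul_assoc _ _ w, ← mul_coe_zpow_eq_of_mul_eq h, ← mul_assoc, hvanish k hk.1 hk.2, zero_mul]

structure BRelations (u : unitary R) (w : ℕ → R) : Prop where
  star_mul_self : ∀ m : ℕ, 0 < m → star (w m) * w m = 1
  map_mul : ∀ m n : ℕ, 0 < m → 0 < n → w (m * n) = w m * w n
  mul_unitary : ∀ m : ℕ, 0 < m → w m * u = (u : R) ^ m * w m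
  star_mul_pow_mul_prime : ∀ p k : ℕ, p.Prime → 1 ≤ k → k < p →
    star (w p) * (u : R) ^ k * w p = 0

namespace BRelations

variable {u : unitary R} {w : ℕ → R}

theorem map_one (hrel : BRelations u w) : w 1 = 1 := by
  have hsq : w 1 = w 1 * w 1 := by simpa using hrel.map_mul 1 1 one_pos one_pos
  calc w 1 = star (w 1) * w 1 * w 1 := by rw [hrel.star_mul_self 1 one_pos, one_mul]
    _ = 1 := by rw [mul_assoc, ← hsq, hrel.star_mul_self 1 one_pos]

theorem star_mul_coe_zpow_mul_self (hrel : BRelations u w) {m : ℕ} (hm : 0 < m) (l : ℤ) :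
    star (w m) * ↑(u ^ l) * w m = if (m : ℤ) ∣ l then ↑(u ^ (l / m)) else 0 := by
  induction m using Nat.recOnMul generalizing l with
  | zero => exact absurd hm (lt_irrefl 0)
  | one => simp [hrel.map_one]
  | prime p hp =>
    split_ifs with hpl
    · obtain ⟨q, rfl⟩ := hpl
      rw [Int.mul_ediv_cancel_left q (by exact_mod_cast hp.ne_zero)]
      exact star_mul_coe_zpow_mul_mul_self (hrel.star_mul_self p hp.pos)
        (hrel.mul_unitary p hp.pos) q
    · exact star_mul_coe_zpow_mul_self_eq_zero hp.pos (hrel.mul_unitary p hp.pos)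
        (hrel.star_mul_pow_mul_prime p · hp) hpl
  | mul a b iha ihb =>
    have ha : 0 < a := Nat.pos_of_mul_pos_right hm
    have hb : 0 < b := Nat.pos_of_mul_pos_left hm
    have ha0 : (a : ℤ) ≠ 0 := by exact_mod_cast ha.ne'
    rw [hrel.map_mul a b ha hb, star_mul_mul_mul_mul, iha ha]
    split_ifs with hal habl habl
    · obtain ⟨q, rfl⟩ := hal
      push_cast at habl ⊢
      rw [Int.mul_ediv_cancel_left q ha0, ihb hb, if_pos ((mul_dvd_mul_iff_left ha0).mp habl),
        Int.mul_ediv_mul_of_pos _ _ (by exact_mod_cast ha)]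
    · obtain ⟨q, rfl⟩ := hal
      push_cast at habl
      rw [Int.mul_ediv_cancel_left q ha0, ihb hb,
        if_neg fun hbq => habl (mul_dvd_mul_left _ hbq)]
    · exact absurd (dvd_trans (by exact_mod_cast dvd_mul_right a b) habl) hal
    · rw [mul_zero, zero_mul]

end BRelations

end MonoidWithZero

theorem stmt10_general {A : Type*} [NormedRing A] [StarRing A]
    (u : unitary A) (w : ℕ → A)
    (hiso : ∀ m : ℕ, 0 < m → star (w m) * w m = 1)
    (hB0 : ∀ m n : ℕ, 0 < m → 0 < n → w (m * n) = w m * w n)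
    (hB1 : ∀ m : ℕ, 0 < m → w m * (u : A) = (u : A) ^ m * w m)
    (hB3 : ∀ p k : ℕ, Nat.Prime p → 1 ≤ k → k < p →
      star (w p) * (u : A) ^ k * w p = 0)
    (m n : ℕ) (hm : 0 < m) (hn : 0 < n) (l : ℤ) :
    (¬ ((Nat.gcd m n : ℤ) ∣ l) → star (w m) * (↑(u ^ l) : A) * w n = 0) ∧
    (((Nat.gcd m n : ℤ) ∣ l) →
      star (w m) * (↑(u ^ l) : A) * w n
        = star (w (m / Nat.gcd m n)) * (↑(u ^ (l / (Nat.gcd m n : ℤ))) : A)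
            * w (n / Nat.gcd m n)) := by
  have hrel : BRelations u w := ⟨hiso, hB0, hB1, hB3⟩
  set d := Nat.gcd m n
  have hd : 0 < d := Nat.gcd_pos_of_pos_left n hm
  have hwm : w m = w d * w (m / d) := by
    rw [← hrel.map_mul d _ hd (Nat.div_pos (Nat.gcd_le_left n hm) hd),
      Nat.mul_div_cancel' (Nat.gcd_dvd_left m n)]
  have hwn : w n = w d * w (n / d) := by
    rw [← hrel.map_mul d _ hd (Nat.div_pos (Nat.gcd_le_right m hn) hd),
      Nat.mul_div_cancel' (Nat.gcd_dvd_right m n)]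
  rw [hwm, hwn, star_mul_mul_mul_mul, hrel.star_mul_coe_zpow_mul_self hd]
  constructor
  · intro hdl
    rw [if_neg hdl, mul_zero, zero_mul]
  · intro hdl
    rw [if_pos hdl]

/-- for `d = gcd(m,n)`, `w_m* u^l w_n = 0` if `d ∤ l`, and otherwise
`w_m* u^l w_n = w_{m/d}* u^{l/d} w_{n/d}` (i.e. `w_{n^{-1}(m∨n)}* u^{l/d} w_{m^{-1}(m∨n)}`). -/
theorem stmt10 {A : Type*} [NormedRing A] [StarRing A] [CStarRing A]
    [NormedAlgebra ℂ A] [CompleteSpace A] [StarModule ℂ A]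
    (u : unitary A) (w : ℕ → A)
    (hiso : ∀ m : ℕ, 0 < m → star (w m) * w m = 1)
    (hB0 : ∀ m n : ℕ, 0 < m → 0 < n → w (m * n) = w m * w n)
    (hB1 : ∀ m : ℕ, 0 < m → w m * (u : A) = (u : A) ^ m * w m)
    (hB3 : ∀ p k : ℕ, Nat.Prime p → 1 ≤ k → k < p →
      star (w p) * (u : A) ^ k * w p = 0)
    (m n : ℕ) (hm : 0 < m) (hn : 0 < n) (l : ℤ) :
    (¬ ((Nat.gcd m n : ℤ) ∣ l) → star (w m) * (↑(u ^ l) : A) * w n = 0) ∧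
    (((Nat.gcd m n : ℤ) ∣ l) →
      star (w m) * (↑(u ^ l) : A) * w n
        = star (w (m / Nat.gcd m n)) * (↑(u ^ (l / (Nat.gcd m n : ℤ))) : A)
            * w (n / Nat.gcd m n)) :=
  stmt10_general u w hiso hB0 hB1 hB3 m n hm hn l
end

section
/- For any f ∈ C(T) and positive integer m, the pre-inner-product norm satisfies ⟨f, f⟩_m = L_m(|f|²) ≥ 0 in C(T), and L_m(|f|²) = 0 implies f = 0; moreover ‖L_m(|f|²)‖_∞ ≤ ‖f‖_∞² and ‖f‖_∞² ≤ m·‖L_m(|f|²)‖_∞. -/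
open scoped Real ComplexOrder

/-! The fibre `{w | w ^ m = z}` embeds into the roots of `X ^ m - z` in `ℂ`, so `L_m g z` is `1/m`
times a sum of at most `m` values of `g`. Hence `‖L_m g‖_∞ ≤ ‖g‖_∞`, and for `g ≥ 0` the sum is
nonnegative and dominates each of its terms, so `g x ≤ m · L_m g (x ^ m)`. Take `g = |f|²`. -/

section PowFibre

open Polynomial

variable {G R : Type*} [Monoid G] [CommRing R] [IsDomain R] {n : ℕ}

lemma mapsTo_setOf_pow_eq_nthRootsFinset (f : G →* R) (hn : 0 < n) (z : G) :
    Set.MapsTo f {w | w ^ n = z} (nthRootsFinset n (f z)) := by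
  rintro w rfl
  simp [mem_nthRootsFinset hn]

lemma finite_setOf_pow_eq {f : G →* R} (hf : Function.Injective f) (hn : 0 < n) (z : G) :
    {w : G | w ^ n = z}.Finite :=
  ((Finset.finite_toSet _).preimage hf.injOn).subset
    (mapsTo_setOf_pow_eq_nthRootsFinset f hn z).subset_preimage

lemma ncard_setOf_pow_eq_le {f : G →* R} (hf : Function.Injective f) (hn : 0 < n) (z : G) :
    {w : G | w ^ n = z}.ncard ≤ n := by
  classical
  calc {w : G | w ^ n = z}.ncard
      ≤ (nthRootsFinset n (f z) : Set R).ncard :=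
        Set.ncard_le_ncard_of_injOn f (mapsTo_setOf_pow_eq_nthRootsFinset f hn z) hf.injOn
    _ ≤ Multiset.card (nthRoots n (f z)) := by
        rw [Set.ncard_coe_finset, nthRootsFinset_def]; exact Multiset.toFinset_card_le _
    _ ≤ n := card_nthRoots n (f z)

end PowFibre

lemma Circle.finite_setOf_pow_eq {m : ℕ} (hm : 0 < m) (z : Circle) :
    {w : Circle | w ^ m = z}.Finite :=
  _root_.finite_setOf_pow_eq (f := Circle.coeHom) Circle.coe_injective hm z

lemma Circle.ncard_setOf_pow_eq_le {m : ℕ} (hm : 0 < m) (z : Circle) :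
    {w : Circle | w ^ m = z}.ncard ≤ m :=
  _root_.ncard_setOf_pow_eq_le (f := Circle.coeHom) Circle.coe_injective hm z

section Averaging

variable {m : ℕ} {g : Circle → ℂ}

lemma Lm_nonneg (hg : ∀ w, 0 ≤ g w) (z : Circle) : 0 ≤ Lm m g z :=
  mul_nonneg (inv_nonneg.2 (Nat.cast_nonneg m))
    (finsum_nonneg fun w => finsum_nonneg fun _ => hg w)

variable (hm : 0 < m)
include hm

lemma Lm_eq_sum (z : Circle) :
    Lm m g z = (m : ℂ)⁻¹ * ∑ w ∈ (Circle.finite_setOf_pow_eq hm z).toFinset, g w := by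
  rw [Lm, finsum_mem_eq_finite_toFinset_sum]

lemma norm_Lm_le {C : ℝ} (hC : ∀ w, ‖g w‖ ≤ C) (z : Circle) : ‖Lm m g z‖ ≤ C := by
  set s := (Circle.finite_setOf_pow_eq hm z).toFinset
  have hC₀ : 0 ≤ C := (norm_nonneg _).trans (hC 1)
  have hs : (s.card : ℝ) ≤ m := by
    rw [← Set.ncard_eq_toFinset_card _ (Circle.finite_setOf_pow_eq hm z)]
    exact_mod_cast Circle.ncard_setOf_pow_eq_le hm z
  rw [Lm_eq_sum hm, norm_mul, norm_inv, Complex.norm_natCast]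
  calc (m : ℝ)⁻¹ * ‖∑ w ∈ s, g w‖
      ≤ (m : ℝ)⁻¹ * (s.card * C) := by
        gcongr
        exact (norm_sum_le _ _).trans (by simpa using Finset.sum_le_card_nsmul s _ C fun w _ => hC w)
    _ ≤ (m : ℝ)⁻¹ * (m * C) := by gcongr
    _ = C := by field_simp

lemma le_mul_Lm_pow (hg : ∀ w, 0 ≤ g w) (x : Circle) : g x ≤ m * Lm m g (x ^ m) := by
  rw [Lm_eq_sum hm, ← mul_assoc, mul_inv_cancel₀ (by exact_mod_cast hm.ne'), one_mul]
  exact Finset.single_le_sum (fun w _ => hg w) (by simp)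

lemma eq_zero_of_Lm_pow_eq_zero (hg : ∀ w, 0 ≤ g w) {x : Circle} (h : Lm m g (x ^ m) = 0) :
    g x = 0 :=
  le_antisymm (by simpa [h] using le_mul_Lm_pow hm hg x) (hg x)

lemma norm_le_mul_norm_Lm_pow (hg : ∀ w, 0 ≤ g w) (x : Circle) :
    ‖g x‖ ≤ m * ‖Lm m g (x ^ m)‖ := by
  simpa using CStarAlgebra.norm_le_norm_of_nonneg_of_le (hg x) (le_mul_Lm_pow hm hg x)

end Averaging

/-- `⟨f,f⟩_m = L_m(|f|²) ≥ 0`, it vanishes only for `f = 0`, and the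
module norm is equivalent to the sup norm: `‖L_m(|f|²)‖_∞ ≤ ‖f‖_∞²` and
`‖f‖_∞² ≤ m ‖L_m(|f|²)‖_∞`. -/
theorem stmt16 (m : ℕ) (hm : 0 < m) (f : C(Circle, ℂ)) :
    (∀ z, 0 ≤ Lm m (fun w => star (f w) * f w) z) ∧
    ((∀ z, Lm m (fun w => star (f w) * f w) z = 0) → f = 0) ∧
    (∀ z, ‖Lm m (fun w => star (f w) * f w) z‖ ≤ ‖f‖ ^ 2) ∧
    ‖f‖ ^ 2 ≤ m * ⨆ z : Circle, ‖Lm m (fun w => star (f w) * f w) z‖ := by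
  set g : Circle → ℂ := fun w => star (f w) * f w
  have hg : ∀ w, 0 ≤ g w := fun w => star_mul_self_nonneg (f w)
  have hg_norm : ∀ w, ‖g w‖ = ‖f w‖ ^ 2 := fun w => by simp [g, sq]
  have hbound : ∀ z, ‖Lm m g z‖ ≤ ‖f‖ ^ 2 :=
    norm_Lm_le hm fun w => (hg_norm w).trans_le (by gcongr; exact f.norm_coe_le_norm w)
  refine ⟨Lm_nonneg hg, fun h => ?_, hbound, ?_⟩
  · ext x
    simpa [g] using eq_zero_of_Lm_pow_eq_zero hm hg (h (x ^ m))
  · obtain ⟨x, hx⟩ := (continuous_norm.comp f.continuous).exists_forall_ge' 1 (by simp)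
    have hfx : ‖f‖ = ‖f x‖ := le_antisymm (f.norm_le_of_nonempty.2 hx) (f.norm_coe_le_norm x)
    calc ‖f‖ ^ 2 = ‖g x‖ := by rw [hfx, hg_norm]
      _ ≤ m * ‖Lm m g (x ^ m)‖ := norm_le_mul_norm_Lm_pow hm hg x
      _ ≤ m * ⨆ z, ‖Lm m g z‖ := by
        gcongr
        exact le_ciSup ⟨_, Set.forall_mem_range.2 hbound⟩ _
end

section
/- Let A be a unital C*-algebra with a unitary u and isometries w_m satisfying (B0), (B1), (B3). Then for every positive integer m and integers k, l: w_m* u^{l-k} w_m equals u^{(l-k)/m} if l ≡ k (mod m), and equals 0 otherwise. -/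
/-!
Conjugating by an isometry `w` with `w * u = u ^ m * w` turns `u ^ (m * q)` into `u ^ q`, so the
divisible case is immediate. For a prime `p` and `p ∤ j`, write `u ^ j = u ^ r * u ^ (p * q)`
with `0 < r < p` and move `u ^ (p * q)` past `w_p`, which leaves the vanishing term
`w_p* u ^ r w_p` of (B3). The non-divisible case for general `m` then follows along a
factorisation of `m` into primes, since `w_{ab} = w_a w_b`.
-/

namespace Unitary

variable {R : Type*}

theorem mul_zpow_eq_zpow_mul [Monoid R] [StarMul R] {u : unitary R} {w : R} {m : ℕ}
    (hwu : w * u = (u : R) ^ m * w) (j : ℤ) :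
    w * ↑(u ^ j) = ↑(u ^ ((m : ℤ) * j)) * w := by
  have h : SemiconjBy w (toUnits u) (toUnits (u ^ m)) := by simpa [SemiconjBy] using hwu
  have := h.units_zpow_right j
  rwa [← map_zpow, ← map_zpow, val_toUnits_apply, val_toUnits_apply, ← zpow_natCast,
    ← zpow_mul] at this

theorem star_mul_zpow_mul_eq_of_star_mul_self [Monoid R] [StarMul R] {u : unitary R} {w : R}
    {m : ℕ} (hw : star w * w = 1) (hwu : w * u = (u : R) ^ m * w) (q : ℤ) :
    star w * ↑(u ^ ((m : ℤ) * q)) * w = ↑(u ^ q) := by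
  rw [mul_assoc, ← mul_zpow_eq_zpow_mul hwu, ← mul_assoc, hw, one_mul]

variable [MonoidWithZero R] [StarMul R] {u : unitary R}

theorem star_mul_zpow_mul_eq_zero_of_forall_lt {w : R} {m : ℕ} (hm : 0 < m)
    (hwu : w * u = (u : R) ^ m * w)
    (hlt : ∀ j : ℕ, 1 ≤ j → j < m → star w * (u : R) ^ j * w = 0)
    {j : ℤ} (hj : ¬ (m : ℤ) ∣ j) :
    star w * ↑(u ^ j) * w = 0 := by
  obtain ⟨r, hr, hrm, hrj⟩ : ∃ r : ℕ, 1 ≤ r ∧ r < m ∧ (r : ℤ) = j % m := by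
    have hm' : (0 : ℤ) < m := by exact_mod_cast hm
    have hnonneg := Int.emod_nonneg j hm'.ne'
    have hltm := Int.emod_lt_of_pos j hm'
    have hne : j % m ≠ 0 := fun h => hj (Int.dvd_of_emod_eq_zero h)
    exact ⟨(j % m).toNat, by omega, by omega, Int.toNat_of_nonneg hnonneg⟩
  have hsplit : u ^ j = u ^ (r : ℤ) * u ^ ((m : ℤ) * (j / m)) := by
    rw [← zpow_add, hrj, Int.emod_add_mul_ediv]
  calc star w * ↑(u ^ j) * w
      = star w * (u : R) ^ r * (w * ↑(u ^ (j / m))) := by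
        rw [mul_zpow_eq_zpow_mul hwu, hsplit, Submonoid.coe_mul, zpow_natCast,
          SubmonoidClass.coe_pow]
        simp only [mul_assoc]
    _ = 0 := by rw [← mul_assoc, hlt r hr hrm, zero_mul]

theorem star_mul_zpow_mul_eq_zero_of_mul {a b : ℕ} {wa wb : R} (hwa : star wa * wa = 1)
    (hwau : wa * u = (u : R) ^ a * wa)
    (ha : ∀ j : ℤ, ¬ (a : ℤ) ∣ j → star wa * ↑(u ^ j) * wa = 0)
    (hb : ∀ j : ℤ, ¬ (b : ℤ) ∣ j → star wb * ↑(u ^ j) * wb = 0)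
    {j : ℤ} (hj : ¬ ((a * b : ℕ) : ℤ) ∣ j) :
    star (wa * wb) * ↑(u ^ j) * (wa * wb) = 0 := by
  have hassoc : star (wa * wb) * ↑(u ^ j) * (wa * wb)
      = star wb * (star wa * ↑(u ^ j) * wa) * wb := by
    rw [star_mul]; simp only [mul_assoc]
  rw [hassoc]
  by_cases haj : (a : ℤ) ∣ j
  · obtain ⟨q, rfl⟩ := haj
    rw [star_mul_zpow_mul_eq_of_star_mul_self hwa hwau]
    refine hb q fun hbq => hj ?_
    push_cast
    exact mul_dvd_mul_left _ hbq
  · rw [ha j haj, mul_zero, zero_mul]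

end Unitary

open Unitary in
theorem stmt19_general {A : Type*} [NormedRing A] [StarRing A]
    (u : unitary A) (w : ℕ → A)
    (hiso : ∀ m : ℕ, 0 < m → star (w m) * w m = 1)
    (hB0 : ∀ m n : ℕ, 0 < m → 0 < n → w (m * n) = w m * w n)
    (hB1 : ∀ m : ℕ, 0 < m → w m * (u : A) = (u : A) ^ m * w m)
    (hB3 : ∀ p j : ℕ, Nat.Prime p → 1 ≤ j → j < p →
      star (w p) * (u : A) ^ j * w p = 0) :
    ∀ m : ℕ, 0 < m → ∀ k l : ℤ,
      (((m : ℤ) ∣ (l - k)) →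
        star (w m) * (↑(u ^ (l - k)) : A) * w m = (↑(u ^ ((l - k) / m)) : A)) ∧
      (¬ ((m : ℤ) ∣ (l - k)) →
        star (w m) * (↑(u ^ (l - k)) : A) * w m = 0) := by
  have hnondiv : ∀ m : ℕ, 0 < m → ∀ j : ℤ, ¬ (m : ℤ) ∣ j →
      star (w m) * ↑(u ^ j) * w m = 0 := by
    intro m
    induction m using Nat.recOnMul with
    | zero => intro h; omega
    | one => exact fun _ j hj => (hj (by simp)).elim
    | prime p hp =>
      exact fun hp0 _ => star_mul_zpow_mul_eq_zero_of_forall_lt hp0 (hB1 p hp0) (hB3 p · hp)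
    | mul a b iha ihb =>
      intro hab j hj
      have ha : 0 < a := Nat.pos_of_mul_pos_right hab
      have hb : 0 < b := Nat.pos_of_mul_pos_left hab
      rw [hB0 a b ha hb]
      exact star_mul_zpow_mul_eq_zero_of_mul (hiso a ha) (hB1 a ha) (iha ha) (ihb hb) hj
  intro m hm k l
  refine ⟨?_, hnondiv m hm (l - k)⟩
  rintro ⟨q, hq⟩
  rw [hq, Int.mul_ediv_cancel_left q (by exact_mod_cast hm.ne')]
  exact star_mul_zpow_mul_eq_of_star_mul_self (hiso m hm) (hB1 m hm) q

/-- under (B0), (B1), (B3), `w_m* u^{l-k} w_m = u^{(l-k)/m}` when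
`l ≡ k (mod m)`, and `0` otherwise. -/
theorem stmt19 {A : Type*} [NormedRing A] [StarRing A] [CStarRing A]
    [NormedAlgebra ℂ A] [CompleteSpace A] [StarModule ℂ A]
    (u : unitary A) (w : ℕ → A)
    (hiso : ∀ m : ℕ, 0 < m → star (w m) * w m = 1)
    (hB0 : ∀ m n : ℕ, 0 < m → 0 < n → w (m * n) = w m * w n)
    (hB1 : ∀ m : ℕ, 0 < m → w m * (u : A) = (u : A) ^ m * w m)
    (hB3 : ∀ p j : ℕ, Nat.Prime p → 1 ≤ j → j < p →
      star (w p) * (u : A) ^ j * w p = 0) :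
    ∀ m : ℕ, 0 < m → ∀ k l : ℤ,
      (((m : ℤ) ∣ (l - k)) →
        star (w m) * (↑(u ^ (l - k)) : A) * w m = (↑(u ^ ((l - k) / m)) : A)) ∧
      (¬ ((m : ℤ) ∣ (l - k)) →
        star (w m) * (↑(u ^ (l - k)) : A) * w m = 0) :=
  stmt19_general u w hiso hB0 hB1 hB3
end
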